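/- arXiv:0902.0202 — 2 statements merged into one kernel-verified Lean document; each statement's English description precedes it below -/
import Mathlib

section
/- Let G be a group with finite generating set X, let Γ_n be the set of all geodesic words of length n over X, and for a geodesic word w let d_-(w) = {x ∈ X : ℓ(wx) < ℓ(w)} where ℓ denotes geodesic length. Then the number of distinct group elements of geodesic length exactly n equals the sum over w ∈ Γ_n of the product over i = 1..n of 1/|d_-(w_i)|, where w_i denotes the prefix of w of length i. -/
/-!
Read backwards from `g`, a geodesic word for `g` is a path `g = w_n, w_{n-1}, …, w_0 = 1` in
which each step multiplies by a generator of `d_-(w_i)`, and `∏ 1/|d_-(w_i)|` is the probability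
that the random walk choosing such a generator uniformly at each step follows this path. So the
weights of the geodesic words for a fixed `g` sum to `1` (induction on `ℓ(g)`, splitting off the
last letter), and summing over the sphere of radius `n` counts its elements.
-/

open scoped Classical

/-- The geodesic length of `g` with respect to the generating set `X`:
the least length of a word over `X` representing `g`. -/
noncomputable def glen {G : Type*} [Group G] (X : Finset G) (g : G) : ℕ :=
  sInf {n : ℕ | ∃ w : List G, (∀ x ∈ w, x ∈ X) ∧ w.prod = g ∧ w.length = n}

/-- A word over `X` is geodesic if its length is the geodesic length of the
element it represents. -/
def IsGeodesic {G : Type*} [Group G] (X : Finset G) (w : List G) : Prop :=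
  (∀ x ∈ w, x ∈ X) ∧ w.length = glen X w.prod

/-- The set of generators that shorten the element represented by `w`. -/
noncomputable def dminus {G : Type*} [Group G] (X : Finset G) (w : List G) : Finset G :=
  X.filter fun x => glen X (w.prod * x) < glen X w.prod

lemma List.finite_setOf_forall_mem_length_eq {α : Type*} {s : Set α} (hs : s.Finite) (n : ℕ) :
    {w : List α | (∀ x ∈ w, x ∈ s) ∧ w.length = n}.Finite := by
  have := hs.to_subtype
  refine ((List.finite_length_eq s n).image (List.map (↑))).subset ?_
  rintro w ⟨hw, rfl⟩
  lift w to List s using hw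
  exact ⟨w, by simp, rfl⟩

section

variable {G : Type*} [Group G] {X : Finset G}

lemma glen_le_length {w : List G} (hw : ∀ x ∈ w, x ∈ X) : glen X w.prod ≤ w.length :=
  Nat.sInf_le ⟨w, hw, rfl, rfl⟩

lemma exists_isGeodesic_prod_eq_of_forall_mem {w : List G} (hw : ∀ x ∈ w, x ∈ X) :
    ∃ u, IsGeodesic X u ∧ u.prod = w.prod := by
  obtain ⟨u, hu, hprod, hlen⟩ := Nat.sInf_mem (⟨w.length, w, hw, rfl, rfl⟩ :
    {n | ∃ u : List G, (∀ x ∈ u, x ∈ X) ∧ u.prod = w.prod ∧ u.length = n}.Nonempty)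
  exact ⟨u, ⟨hu, by rw [hprod]; exact hlen⟩, hprod⟩

lemma exists_isGeodesic_prod_eq (hinv : ∀ x ∈ X, x⁻¹ ∈ X)
    (hgen : Subgroup.closure (X : Set G) = ⊤) (g : G) : ∃ w, IsGeodesic X w ∧ w.prod = g := by
  have hX : (X : Set G) ∪ (X : Set G)⁻¹ = X :=
    Set.union_eq_left.mpr fun x hx => by simpa using hinv _ hx
  have hg : g ∈ Submonoid.closure (X : Set G) := by
    rw [← hX, ← Subgroup.closure_toSubmonoid, hgen]; trivial
  obtain ⟨w, hw, rfl⟩ := Submonoid.exists_list_of_mem_closure hg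
  exact exists_isGeodesic_prod_eq_of_forall_mem hw

lemma glen_one : glen X 1 = 0 :=
  Nat.le_zero.mp (glen_le_length (w := []) (by simp))

lemma isGeodesic_nil : IsGeodesic X [] :=
  ⟨by simp, glen_one.symm⟩

lemma eq_one_of_glen_eq_zero (hinv : ∀ x ∈ X, x⁻¹ ∈ X)
    (hgen : Subgroup.closure (X : Set G) = ⊤) {g : G} (hg : glen X g = 0) : g = 1 := by
  obtain ⟨w, ⟨-, hlen⟩, rfl⟩ := exists_isGeodesic_prod_eq hinv hgen g
  rw [List.length_eq_zero_iff.mp (hlen.trans hg), List.prod_nil]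

lemma glen_le_glen_mul_add_one (hinv : ∀ x ∈ X, x⁻¹ ∈ X)
    (hgen : Subgroup.closure (X : Set G) = ⊤) (g : G) {x : G} (hx : x ∈ X) :
    glen X g ≤ glen X (g * x) + 1 := by
  obtain ⟨w, ⟨hw, hlen⟩, hprod⟩ := exists_isGeodesic_prod_eq hinv hgen (g * x)
  have hword : ∀ y ∈ w ++ [x⁻¹], y ∈ X := by
    simpa [or_imp, forall_and] using ⟨hw, hinv x hx⟩
  rw [hprod] at hlen
  simpa [hprod, ← hlen] using glen_le_length hword

lemma IsGeodesic.of_append {u v : List G} (h : IsGeodesic X (u ++ v)) : IsGeodesic X u := by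
  have hu : ∀ x ∈ u, x ∈ X := fun x hx => h.1 x (List.mem_append_left v hx)
  have hv : ∀ x ∈ v, x ∈ X := fun x hx => h.1 x (List.mem_append_right u hx)
  refine ⟨hu, (glen_le_length hu).antisymm' ?_⟩
  obtain ⟨u', ⟨hu', hlen'⟩, hprod'⟩ := exists_isGeodesic_prod_eq_of_forall_mem hu
  have hshort : glen X (u' ++ v).prod ≤ (u' ++ v).length :=
    glen_le_length fun x hx => (List.mem_append.mp hx).elim (hu' x) (hv x)
  have hgeo := h.2
  rw [hprod'] at hlen'
  simp only [List.prod_append, hprod', List.length_append] at hshort hgeo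
  omega

noncomputable def descents (X : Finset G) (g : G) : Finset G :=
  X.filter fun x => glen X (g * x) < glen X g

lemma dminus_eq_descents (w : List G) : dminus X w = descents X w.prod := rfl

lemma glen_mul_add_one_of_mem_descents (hinv : ∀ x ∈ X, x⁻¹ ∈ X)
    (hgen : Subgroup.closure (X : Set G) = ⊤) {g x : G} (hx : x ∈ descents X g) :
    glen X (g * x) + 1 = glen X g := by
  obtain ⟨hxX, hlt⟩ := Finset.mem_filter.mp hx
  have := glen_le_glen_mul_add_one hinv hgen g hxX
  omega

lemma IsGeodesic.inv_mem_descents_of_append_singleton (hinv : ∀ x ∈ X, x⁻¹ ∈ X)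
    {w : List G} {y : G} (h : IsGeodesic X (w ++ [y])) :
    y⁻¹ ∈ descents X (w ++ [y]).prod := by
  have hy : y ∈ X := h.1 y (by simp)
  have hw := h.of_append
  have hgeo := h.2
  simp only [List.length_append, List.length_singleton] at hgeo
  refine Finset.mem_filter.mpr ⟨hinv y hy, ?_⟩
  rw [← hgeo, List.prod_append, List.prod_singleton, mul_inv_cancel_right, ← hw.2]
  omega

lemma finite_setOf_isGeodesic_length_eq (X : Finset G) (n : ℕ) :
    {w : List G | IsGeodesic X w ∧ w.length = n}.Finite :=
  (List.finite_setOf_forall_mem_length_eq X.finite_toSet n).subset fun _ hw => ⟨hw.1.1, hw.2⟩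

noncomputable def geodesics (X : Finset G) (n : ℕ) : Finset (List G) :=
  (finite_setOf_isGeodesic_length_eq X n).toFinset

@[simp]
lemma mem_geodesics {n : ℕ} {w : List G} : w ∈ geodesics X n ↔ IsGeodesic X w ∧ w.length = n :=
  Set.Finite.mem_toFinset _

lemma filter_geodesics_zero (hinv : ∀ x ∈ X, x⁻¹ ∈ X)
    (hgen : Subgroup.closure (X : Set G) = ⊤) {g : G} (hg : glen X g = 0) :
    {w ∈ geodesics X 0 | w.prod = g} = {[]} := by
  ext w
  simp only [Finset.mem_filter, mem_geodesics, List.length_eq_zero_iff, Finset.mem_singleton]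
  constructor
  · exact fun h => h.1.2
  · rintro rfl
    exact ⟨⟨isGeodesic_nil, rfl⟩, (eq_one_of_glen_eq_zero hinv hgen hg).symm⟩

lemma filter_geodesics_succ (hinv : ∀ x ∈ X, x⁻¹ ∈ X) {n : ℕ} {g : G}
    (hg : glen X g = n + 1) :
    {w ∈ geodesics X (n + 1) | w.prod = g} =
      (descents X g).biUnion fun x => {w ∈ geodesics X n | w.prod = g * x}.image (· ++ [x⁻¹]) := by
  ext w
  simp only [Finset.mem_filter, mem_geodesics, Finset.mem_biUnion, Finset.mem_image]
  constructor
  · rintro ⟨⟨hw, hlen⟩, rfl⟩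
    obtain rfl | ⟨u, y, rfl⟩ := w.eq_nil_or_concat'
    · simp at hlen
    refine ⟨y⁻¹, hw.inv_mem_descents_of_append_singleton hinv, u, ⟨⟨hw.of_append, ?_⟩, ?_⟩, ?_⟩
    · simpa using hlen
    · simp
    · simp
  · rintro ⟨x, hx, u, ⟨⟨hu, hlen⟩, hprod⟩, rfl⟩
    have hxX : x ∈ X := (Finset.mem_filter.mp hx).1
    have hprod' : (u ++ [x⁻¹]).prod = g := by simp [hprod]
    refine ⟨⟨⟨?_, ?_⟩, by simp [hlen]⟩, hprod'⟩
    · simpa [or_imp, forall_and] using ⟨hu.1, hinv x hxX⟩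
    · rw [hprod', hg, List.length_append, hlen, List.length_singleton]

noncomputable def prefixWeight (X : Finset G) (n : ℕ) (w : List G) : ℚ :=
  ∏ i ∈ Finset.range n, (1 : ℚ) / ((dminus X (w.take (i + 1))).card : ℚ)

lemma prefixWeight_succ_append_singleton {n : ℕ} {w : List G} (hw : w.length = n) (y : G) :
    prefixWeight X (n + 1) (w ++ [y]) =
      prefixWeight X n w / (descents X (w ++ [y]).prod).card := by
  rw [prefixWeight, Finset.prod_range_succ, ← hw, List.take_of_length_le (by simp),
    dminus_eq_descents, one_div, ← div_eq_mul_inv]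
  congr 1
  refine Finset.prod_congr rfl fun i hi => ?_
  rw [List.take_append_of_le_length (by simpa using hi)]

lemma descents_nonempty (hinv : ∀ x ∈ X, x⁻¹ ∈ X)
    (hgen : Subgroup.closure (X : Set G) = ⊤) {g : G} (hg : g ≠ 1) : (descents X g).Nonempty := by
  obtain ⟨w, hw, rfl⟩ := exists_isGeodesic_prod_eq hinv hgen g
  obtain rfl | ⟨u, y, rfl⟩ := w.eq_nil_or_concat'
  · exact absurd List.prod_nil hg
  · exact ⟨y⁻¹, hw.inv_mem_descents_of_append_singleton hinv⟩

lemma sum_prefixWeight_filter_geodesics (hinv : ∀ x ∈ X, x⁻¹ ∈ X)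
    (hgen : Subgroup.closure (X : Set G) = ⊤) (n : ℕ) {g : G} (hg : glen X g = n) :
    ∑ w ∈ geodesics X n with w.prod = g, prefixWeight X n w = 1 := by
  induction n generalizing g with
  | zero => simp [filter_geodesics_zero hinv hgen hg, prefixWeight]
  | succ n ih =>
    have hne : (descents X g).Nonempty :=
      descents_nonempty hinv hgen fun h => by simp [h, glen_one] at hg
    have hfiber : ∀ x ∈ descents X g,
        ∑ w ∈ {u ∈ geodesics X n | u.prod = g * x}.image (· ++ [x⁻¹]), prefixWeight X (n + 1) w =
          1 / (descents X g).card := by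
      intro x hx
      rw [Finset.sum_image fun _ _ _ _ h => List.append_cancel_right h]
      calc ∑ u ∈ geodesics X n with u.prod = g * x, prefixWeight X (n + 1) (u ++ [x⁻¹])
          = ∑ u ∈ geodesics X n with u.prod = g * x, prefixWeight X n u / (descents X g).card := by
            refine Finset.sum_congr rfl fun u hu => ?_
            obtain ⟨⟨-, hlen⟩, hprod⟩ := by simpa using hu
            rw [prefixWeight_succ_append_singleton hlen, List.prod_append, hprod]
            simp
        _ = 1 / (descents X g).card := by
          have := glen_mul_add_one_of_mem_descents hinv hgen hx
          rw [← Finset.sum_div, ih (by omega)]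
    rw [filter_geodesics_succ hinv hg, Finset.sum_biUnion, Finset.sum_congr rfl hfiber,
      Finset.sum_const, nsmul_eq_mul, mul_one_div_cancel (by simpa using hne.card_ne_zero)]
    intro x _ y _ hxy
    simp only [Function.onFun, Finset.disjoint_left, Finset.mem_image, Finset.mem_filter,
      mem_geodesics]
    rintro _ ⟨u, ⟨⟨-, hu⟩, -⟩, rfl⟩ ⟨v, ⟨⟨-, hv⟩, -⟩, huv⟩
    exact hxy (by simpa using (List.append_inj huv (hv.trans hu.symm)).2.symm)

lemma coe_image_prod_geodesics (hinv : ∀ x ∈ X, x⁻¹ ∈ X)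
    (hgen : Subgroup.closure (X : Set G) = ⊤) (n : ℕ) :
    ((geodesics X n).image List.prod : Set G) = {g | glen X g = n} := by
  ext g
  simp only [Finset.coe_image, Set.mem_image, Finset.mem_coe, mem_geodesics, Set.mem_ofPred_eq]
  constructor
  · rintro ⟨w, ⟨hw, rfl⟩, rfl⟩
    exact hw.2.symm
  · intro hg
    obtain ⟨w, hw, rfl⟩ := exists_isGeodesic_prod_eq hinv hgen g
    exact ⟨w, ⟨hw, hw.2.trans hg⟩, rfl⟩

end

/-- The number of elements of geodesic length exactly `n` equals the sum over all
geodesic words `w` of length `n` of `∏_{i=1}^n 1/|d_-(w_i)|`, `w_i` the prefix of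
length `i`. -/
theorem sphere_card_eq_sum_over_geodesics {G : Type*} [Group G]
    (X : Finset G) (hinv : ∀ x ∈ X, x⁻¹ ∈ X)
    (hgen : Subgroup.closure (X : Set G) = ⊤) (n : ℕ) :
    (Nat.card {g : G | glen X g = n} : ℚ) =
      ∑ᶠ w ∈ {w : List G | IsGeodesic X w ∧ w.length = n},
        ∏ i ∈ Finset.range n, (1 : ℚ) / ((dminus X (w.take (i + 1))).card : ℚ) := by
  rw [finsum_mem_eq_finite_toFinset_sum _ (finite_setOf_isGeodesic_length_eq X n),
    ← coe_image_prod_geodesics hinv hgen n, Nat.card_coe_set_eq, Set.ncard_coe_finset,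
    Finset.card_eq_sum_ones, Nat.cast_sum,
    ← Finset.sum_fiberwise_of_maps_to fun _ hw => Finset.mem_image_of_mem List.prod hw]
  refine Finset.sum_congr rfl fun g hg => ?_
  obtain ⟨w, hw, rfl⟩ := Finset.mem_image.mp hg
  obtain ⟨hgeo, hlen⟩ := mem_geodesics.mp hw
  exact (sum_prefixWeight_filter_geodesics hinv hgen n (hgeo.2.symm.trans hlen)).symm
end

section
/- Suppose f : ℕ → ℕ is submultiplicative with f(n) ≥ 1, and suppose f(22) = 9035758992. Then the growth rate γ = lim f(n)^{1/n} satisfies γ ≤ 9035758992^{1/22} < 2.835. -/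
/-!
Along the multiples `m * k` of a fixed `m`, submultiplicativity gives `f (m * k) ≤ f m ^ k`, so
`f (m * k) ^ (1 / (m * k)) ≤ f m ^ (1 / m)`; a limit of `f n ^ (1 / n)` is therefore at most
`f m ^ (1 / m)` for every `m ≥ 1`. With `m = 22` the numerical bound amounts to
`9035758992 < 2.835 ^ 22`.
-/

open Filter

lemma le_pow_of_submultiplicative {f : ℕ → ℕ} (hsub : ∀ n m : ℕ, f (n + m) ≤ f n * f m)
    (m : ℕ) {k : ℕ} (hk : 1 ≤ k) : f (m * k) ≤ f m ^ k := by
  induction k, hk using Nat.le_induction with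
  | base => simp
  | succ k _ ih =>
    calc f (m * (k + 1)) = f (m * k + m) := by rw [Nat.mul_succ]
      _ ≤ f (m * k) * f m := hsub _ _
      _ ≤ f m ^ k * f m := Nat.mul_le_mul_right _ ih
      _ = f m ^ (k + 1) := (pow_succ _ _).symm

lemma rpow_one_div_mul_le_of_submultiplicative {f : ℕ → ℕ}
    (hsub : ∀ n m : ℕ, f (n + m) ≤ f n * f m) (m : ℕ) {k : ℕ} (hk : 1 ≤ k) :
    (f (m * k) : ℝ) ^ ((1 : ℝ) / (m * k : ℕ)) ≤ (f m : ℝ) ^ ((1 : ℝ) / m) := by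
  have hk' : (k : ℝ) ≠ 0 := by positivity
  calc (f (m * k) : ℝ) ^ ((1 : ℝ) / (m * k : ℕ))
      ≤ ((f m : ℝ) ^ k) ^ ((1 : ℝ) / (m * k : ℕ)) := by
        gcongr
        exact_mod_cast le_pow_of_submultiplicative hsub m hk
    _ = (f m : ℝ) ^ ((1 : ℝ) / m) := by
        rw [← Real.rpow_natCast_mul (by positivity)]
        congr 1
        push_cast
        field_simp

lemma le_rpow_one_div_of_tendsto_of_submultiplicative {f : ℕ → ℕ}
    (hsub : ∀ n m : ℕ, f (n + m) ≤ f n * f m) {γ : ℝ}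
    (hγ : Tendsto (fun n : ℕ => (f n : ℝ) ^ ((1 : ℝ) / n)) atTop (nhds γ))
    {m : ℕ} (hm : 1 ≤ m) : γ ≤ (f m : ℝ) ^ ((1 : ℝ) / m) := by
  have hmul : Tendsto (m * ·) atTop atTop :=
    tendsto_id.const_mul_atTop' (by omega)
  refine le_of_tendsto (hγ.comp hmul) ?_
  filter_upwards [eventually_ge_atTop 1] with k hk
  exact rpow_one_div_mul_le_of_submultiplicative hsub m hk

lemma rpow_one_div_22_lt : (9035758992 : ℝ) ^ ((1 : ℝ) / 22) < 2.835 := by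
  rw [one_div, Real.rpow_inv_lt_iff_of_pos (by norm_num) (by norm_num) (by norm_num)]
  norm_num

theorem growth_rate_upper_bound_from_f22_general (f : ℕ → ℕ)
    (hsub : ∀ n m : ℕ, f (n + m) ≤ f n * f m)
    (h22 : f 22 = 9035758992) :
    ∀ γ : ℝ, Tendsto (fun n : ℕ => (f n : ℝ) ^ ((1 : ℝ) / n)) atTop (nhds γ) →
      γ ≤ (9035758992 : ℝ) ^ ((1 : ℝ) / 22) ∧
        (9035758992 : ℝ) ^ ((1 : ℝ) / 22) < 2.835 := by
  intro γ hγ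
  have hγ22 := le_rpow_one_div_of_tendsto_of_submultiplicative hsub hγ (m := 22) (by norm_num)
  rw [h22] at hγ22
  exact ⟨by exact_mod_cast hγ22, rpow_one_div_22_lt⟩

/-- If `f` is submultiplicative with `f n ≥ 1` and `f 22 = 9035758992`, then the
growth rate `γ = lim f(n)^{1/n}` satisfies `γ ≤ 9035758992^{1/22} < 2.835`. -/
theorem growth_rate_upper_bound_from_f22 (f : ℕ → ℕ)
    (hpos : ∀ n, 1 ≤ f n)
    (hsub : ∀ n m : ℕ, f (n + m) ≤ f n * f m)
    (h22 : f 22 = 9035758992) :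
    ∀ γ : ℝ, Tendsto (fun n : ℕ => (f n : ℝ) ^ ((1 : ℝ) / n)) atTop (nhds γ) →
      γ ≤ (9035758992 : ℝ) ^ ((1 : ℝ) / 22) ∧
        (9035758992 : ℝ) ^ ((1 : ℝ) / 22) < 2.835 :=
  growth_rate_upper_bound_from_f22_general f hsub h22
end
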